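/- The Top Trading Cycles rule with deterministic endowments is SD-top-strategy-proof: no agent can, by misreporting her preference, strictly increase the probability (here 0 or 1) of receiving her true top-ranked object. -/
import Mathlib


open Finset

/-- A strict preference over the `n` objects, given by its rank function:
`P x ≤ P y` means `x` is weakly preferred to `y` (rank `0` is best). -/
abbrev Pref (n : ℕ) := Equiv.Perm (Fin n)

/-- The top-ranked object of a preference. -/
def topOf {n : ℕ} [NeZero n] (P : Pref n) : Fin n := P.symm 0

/-- Upper contour set of object `x` at preference `P`. -/
def UC {n : ℕ} (P : Pref n) (x : Fin n) : Finset (Fin n) :=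
  Finset.univ.filter fun y => P y ≤ P x

/-- First-order stochastic dominance of lottery `l` over lottery `m` w.r.t. `P`. -/
def SDdom {n : ℕ} (P : Pref n) (l m : Fin n → ℝ) : Prop :=
  ∀ x, ∑ y ∈ UC P x, m y ≤ ∑ y ∈ UC P x, l y

/-- Strict stochastic dominance. -/
def SDstrict {n : ℕ} (P : Pref n) (l m : Fin n → ℝ) : Prop :=
  SDdom P l m ∧ ∃ x, ∑ y ∈ UC P x, m y < ∑ y ∈ UC P x, l y

/-- Point mass at `x`. -/
def delta {n : ℕ} (x : Fin n) : Fin n → ℝ := fun y => if y = x then 1 else 0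

/-- A bistochastic (doubly stochastic) matrix: a probabilistic assignment.
Row `i` is agent `i`'s lottery over objects. -/
def Bistochastic {n : ℕ} (A : Matrix (Fin n) (Fin n) ℝ) : Prop :=
  (∀ i j, 0 ≤ A i j) ∧ (∀ i, ∑ j, A i j = 1) ∧ (∀ j, ∑ i, A i j = 1)

/-- `B` SD-Pareto-dominates `A` at profile `P`. -/
def ParetoDom {n : ℕ} (P : Fin n → Pref n) (B A : Matrix (Fin n) (Fin n) ℝ) : Prop :=
  (∀ i, SDdom (P i) (B i) (A i)) ∧ ∃ i, SDstrict (P i) (B i) (A i)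

/-- `A` is SD-Pareto-efficient at `P`: no bistochastic matrix dominates it. -/
def SDEffAt {n : ℕ} (P : Fin n → Pref n) (A : Matrix (Fin n) (Fin n) ℝ) : Prop :=
  ¬ ∃ B, Bistochastic B ∧ ParetoDom P B A

/-- `A` is SD-individually rational at `P`: agent `i` (endowed with object `i`)
gets a lottery stochastically dominating the point mass at her endowment. -/
def SDIRAt {n : ℕ} (P : Fin n → Pref n) (A : Matrix (Fin n) (Fin n) ℝ) : Prop :=
  ∀ i, SDdom (P i) (A i) (delta i)

/-- The most preferred object of `P` among the objects in `S`. -/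
noncomputable def best {n : ℕ} (P : Pref n) (S : Finset (Fin n)) (hS : S.Nonempty) : Fin n :=
  P.symm ((S.image fun y => P y).min' (hS.image _))

/-- One pass of the TTC algorithm with explicit fuel: repeatedly find a cycle of the
map sending each remaining agent to the owner of her most preferred remaining object
(object `j` is owned by agent `j`), trade along the cycle, and remove its members. -/
noncomputable def TTCaux {n : ℕ} (Pr : Fin n → Pref n) : ℕ → Finset (Fin n) → Fin n → Fin n
  | 0, _ => id
  | fuel+1, S =>
    if hS : S.Nonempty then
      let f : Fin n → Fin n := fun i => if i ∈ S then best (Pr i) S hS else i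
      let c := f^[n] hS.choose
      let Cyc := ((Finset.range (n+1)).image fun k => f^[k] c) ∩ S
      fun i => if i ∈ Cyc then f i else TTCaux Pr fuel (S \ Cyc) i
    else id

/-- The Top Trading Cycles rule: `TTC Pr i` is the object assigned to agent `i`
when agent `j` is endowed with object `j`. -/
noncomputable def TTC {n : ℕ} (Pr : Fin n → Pref n) : Fin n → Fin n :=
  TTCaux Pr n Finset.univ

/-- The TTC rule viewed as a probabilistic assignment rule (a permutation matrix). -/
noncomputable def TTCmat {n : ℕ} (Pr : Fin n → Pref n) : Matrix (Fin n) (Fin n) ℝ :=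
  fun i j => if TTC Pr i = j then 1 else 0


section AuxTTC
variable {n : ℕ}

lemma best_mem (P : Pref n) (S : Finset (Fin n)) (hS : S.Nonempty) : best P S hS ∈ S := by
  unfold best
  have h := (S.image fun y => P y).min'_mem (hS.image _)
  rw [Finset.mem_image] at h
  obtain ⟨y, hy, hEq⟩ := h
  rw [← hEq, Equiv.symm_apply_apply]
  exact hy

lemma apply_best (P : Pref n) (S : Finset (Fin n)) (hS : S.Nonempty) :
    P (best P S hS) = (S.image fun y => P y).min' (hS.image _) := by
  unfold best; rw [Equiv.apply_symm_apply]

lemma best_le (P : Pref n) {S : Finset (Fin n)} (hS : S.Nonempty) {y : Fin n} (hy : y ∈ S) :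
    P (best P S hS) ≤ P y := by
  rw [apply_best]; exact Finset.min'_le _ _ (Finset.mem_image_of_mem _ hy)

lemma best_subset (P : Pref n) {S T : Finset (Fin n)} (hTS : T ⊆ S) (hT : T.Nonempty)
    (hS : S.Nonempty) (hmem : best P S hS ∈ T) : best P T hT = best P S hS := by
  have h1 : P (best P T hT) ≤ P (best P S hS) := best_le P hT hmem
  have h2 : P (best P S hS) ≤ P (best P T hT) := best_le P hS (hTS (best_mem P T hT))
  exact P.injective (le_antisymm h1 h2)

lemma best_topOf [NeZero n] (P : Pref n) {S : Finset (Fin n)} (hS : S.Nonempty)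
    (h : topOf P ∈ S) : best P S hS = topOf P := by
  have h1 : P (best P S hS) ≤ P (topOf P) := best_le P hS h
  have h2 : P (topOf P) = 0 := by unfold topOf; rw [Equiv.apply_symm_apply]
  have h3 : P (best P S hS) = 0 := le_antisymm (h2 ▸ h1) (Fin.zero_le _)
  apply P.injective; rw [h3, h2]

/-- The pointing map of TTC at a set `S` of remaining agents/objects. -/
noncomputable def fmap (Q : Fin n → Pref n) (S : Finset (Fin n)) (hS : S.Nonempty) :
    Fin n → Fin n :=
  fun i => if i ∈ S then best (Q i) S hS else i

lemma fmap_mem {Q : Fin n → Pref n} {S : Finset (Fin n)} {hS : S.Nonempty} {j : Fin n}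
    (hj : j ∈ S) : fmap Q S hS j ∈ S := by
  unfold fmap; rw [if_pos hj]; exact best_mem _ _ _

lemma fmap_agree (Q : Fin n → Pref n) {S T : Finset (Fin n)} (hTS : T ⊆ S) (hT : T.Nonempty)
    (hS : S.Nonempty) {j : Fin n} (hj : j ∈ T) (hb : fmap Q S hS j ∈ T) :
    fmap Q T hT j = fmap Q S hS j := by
  unfold fmap at hb ⊢
  rw [if_pos (hTS hj)] at hb
  rw [if_pos hj, if_pos (hTS hj)]
  exact best_subset _ hTS hT hS hb

/-- `C` is a union of cycles of `f`. -/
def IsCyc (f : Fin n → Fin n) (C : Finset (Fin n)) : Prop :=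
  ∀ j ∈ C, f j ∈ C ∧ ∃ m, 0 < m ∧ f^[m] j = j

lemma iter_mem {f : Fin n → Fin n} {C : Finset (Fin n)} (hC : ∀ j ∈ C, f j ∈ C)
    {x : Fin n} (hx : x ∈ C) (k : ℕ) : f^[k] x ∈ C := by
  induction k with
  | zero => simpa
  | succ k ih => rw [Function.iterate_succ_apply']; exact hC _ ih

lemma iter_agree {f g : Fin n → Fin n} {C : Finset (Fin n)} (hC : ∀ j ∈ C, f j ∈ C)
    (hfg : ∀ j ∈ C, f j = g j) {x : Fin n} (hx : x ∈ C) (k : ℕ) : f^[k] x = g^[k] x := by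
  induction k with
  | zero => rfl
  | succ k ih =>
    rw [Function.iterate_succ_apply', Function.iterate_succ_apply', ← ih,
      hfg _ (iter_mem hC hx k)]

lemma IsCyc_congr {f g : Fin n → Fin n} {C : Finset (Fin n)} (hfg : ∀ j ∈ C, f j = g j)
    (h : IsCyc f C) : IsCyc g C := by
  intro j hj
  obtain ⟨h1, m, hm, h2⟩ := h j hj
  have hcl : ∀ j ∈ C, f j ∈ C := fun j hj => (h j hj).1
  exact ⟨hfg j hj ▸ h1, m, hm, by rw [← iter_agree hcl hfg hj m]; exact h2⟩

lemma cyc_ret {f : Fin n → Fin n} {D : Finset (Fin n)} (hD : ∀ j ∈ D, f j ∈ D)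
    {y : Fin n} {m : ℕ} (hm : 0 < m) (hmy : f^[m] y = y) (hfy : f y ∈ D) : y ∈ D := by
  have : y = f^[m - 1] (f y) := by
    conv_lhs => rw [← hmy]
    rw [← Function.iterate_succ_apply]
    congr 1; omega
  rw [this]; exact iter_mem hD hfy _

lemma iter_period {f : Fin n → Fin n} {c : Fin n} {m : ℕ} (h : f^[m] c = c) (q r : ℕ) :
    f^[m * q + r] c = f^[r] c := by
  induction q with
  | zero => simp
  | succ q ih =>
    have he : m * (q + 1) + r = (m * q + r) + m := by ring
    rw [he, Function.iterate_add_apply, h, ih]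

/-- The cycle removed by one step of the algorithm. -/
noncomputable def Dset (Q : Fin n → Pref n) (S : Finset (Fin n)) (hS : S.Nonempty) :
    Finset (Fin n) :=
  ((Finset.range (n+1)).image fun k => (fmap Q S hS)^[k] ((fmap Q S hS)^[n] hS.choose)) ∩ S

lemma TTCaux_succ (Q : Fin n → Pref n) (fuel : ℕ) (S : Finset (Fin n)) :
    TTCaux Q (fuel+1) S = if hS : S.Nonempty then
      (fun i => if i ∈ Dset Q S hS then fmap Q S hS i
        else TTCaux Q fuel (S \ Dset Q S hS) i)
    else id := rfl

lemma Dset_spec (Q : Fin n → Pref n) (S : Finset (Fin n)) (hS : S.Nonempty) :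
    (Dset Q S hS).Nonempty ∧ Dset Q S hS ⊆ S ∧ IsCyc (fmap Q S hS) (Dset Q S hS) ∧
    ∀ x ∈ Dset Q S hS, ∀ j ∈ Dset Q S hS, ∃ k, (fmap Q S hS)^[k] x = j := by
  set f := fmap Q S hS with hfdef
  have hmapS : ∀ j ∈ S, f j ∈ S := fun j hj => fmap_mem hj
  set a := hS.choose with hadef
  have ha : a ∈ S := hS.choose_spec
  have hcardS : S.card ≤ n := by
    have := Finset.card_le_card (Finset.subset_univ S)
    simpa using this
  -- pigeonhole to find a period
  obtain ⟨k1, hk1, k2, hk2, hne, heq⟩ :=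
    Finset.exists_ne_map_eq_of_card_lt_of_maps_to
      (s := Finset.range (n+1)) (t := S)
      (by rw [Finset.card_range]; omega)
      (fun k _ => iter_mem hmapS ha k)
  rw [Finset.mem_range] at hk1 hk2
  obtain ⟨b1, b2, hb1, hb2, hlt, hbeq⟩ : ∃ b1 b2, b1 ≤ n ∧ b2 ≤ n ∧ b1 < b2 ∧
      f^[b1] a = f^[b2] a := by
    rcases lt_or_gt_of_ne hne with h | h
    · exact ⟨k1, k2, by omega, by omega, h, heq⟩
    · exact ⟨k2, k1, by omega, by omega, h, heq.symm⟩
  set m := b2 - b1 with hmdef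
  have hm : 0 < m := by omega
  have hmn : m ≤ n := by omega
  obtain ⟨c, hc, hper, hmemD⟩ : ∃ c, c ∈ S ∧ f^[m] c = c ∧
      ∀ j, j ∈ Dset Q S hS ↔ ∃ k ≤ n, f^[k] c = j := by
    refine ⟨f^[n] a, iter_mem hmapS ha n, ?_, ?_⟩
    · rw [← Function.iterate_add_apply]
      have h1 : m + n = (n - b1) + b2 := by omega
      rw [h1, Function.iterate_add_apply, ← hbeq, ← Function.iterate_add_apply]
      congr 1; omega
    · intro j
      unfold Dset
      rw [Finset.mem_inter, Finset.mem_image]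
      constructor
      · rintro ⟨⟨k, hk, hkj⟩, _⟩
        rw [Finset.mem_range] at hk
        exact ⟨k, by omega, hkj⟩
      · rintro ⟨k, hk, hkj⟩
        refine ⟨⟨k, Finset.mem_range.2 (by omega), hkj⟩, ?_⟩
        rw [← hkj]
        exact iter_mem hmapS (iter_mem hmapS ha n) k
  have hiterc : ∀ k, f^[k] c = f^[k % m] c := by
    intro k
    conv_lhs => rw [← Nat.div_add_mod k m]
    exact iter_period hper _ _
  have hcD : c ∈ Dset Q S hS := (hmemD c).2 ⟨0, by omega, rfl⟩
  refine ⟨⟨c, hcD⟩, fun x hx => (Finset.mem_inter.1 hx).2, ?_, ?_⟩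
  · intro j hj
    obtain ⟨k, hk, hkj⟩ := (hmemD j).1 hj
    constructor
    · rw [hmemD]
      refine ⟨(k+1) % m, by have := Nat.mod_lt (k+1) hm; omega, ?_⟩
      rw [← hiterc (k+1), Function.iterate_succ_apply', hkj]
    · refine ⟨m, hm, ?_⟩
      rw [← hkj, ← Function.iterate_add_apply, add_comm m k,
        Function.iterate_add_apply, hper]
  · intro x hx j hj
    obtain ⟨k1', _, hk1'⟩ := (hmemD x).1 hx
    obtain ⟨k2', _, hk2'⟩ := (hmemD j).1 hj
    have hc0 : f^[m * (k1' + 1) - k1'] x = c := by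
      rw [← hk1', ← Function.iterate_add_apply]
      have h1 : m * (k1' + 1) - k1' + k1' = m * (k1' + 1) + 0 := by
        have : k1' ≤ m * (k1' + 1) := by nlinarith
        omega
      rw [h1, iter_period hper]
      simp
    refine ⟨(m * (k1' + 1) - k1') + k2', ?_⟩
    rw [add_comm, Function.iterate_add_apply, hc0, hk2']

lemma TTCaux_empty (Q : Fin n → Pref n) (fuel : ℕ) : TTCaux Q fuel (∅ : Finset (Fin n)) = id := by
  cases fuel with
  | zero => rfl
  | succ fuel => rw [TTCaux_succ, dif_neg (by simp)]

lemma Dset_card_lt (Q : Fin n → Pref n) (S : Finset (Fin n)) (hS : S.Nonempty) :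
    (S \ Dset Q S hS).card < S.card := by
  obtain ⟨hne, hsub, _, _⟩ := Dset_spec Q S hS
  have h1 := Finset.card_sdiff_of_subset hsub
  have h2 := Finset.card_le_card hsub
  have h3 : 0 < (Dset Q S hS).card := Finset.card_pos.2 hne
  omega

lemma TTCaux_fuel (Q : Fin n → Pref n) :
    ∀ fuel fuel' S, S.card ≤ fuel → S.card ≤ fuel' → TTCaux Q fuel S = TTCaux Q fuel' S := by
  intro fuel
  induction fuel with
  | zero =>
    intro fuel' S h h'
    have hS0 : S = ∅ := Finset.card_eq_zero.1 (Nat.le_zero.1 h)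
    rw [hS0, TTCaux_empty, TTCaux_empty]
  | succ fuel ih =>
    intro fuel' S h h'
    by_cases hS : S.Nonempty
    · cases fuel' with
      | zero =>
        exact absurd (Finset.card_pos.2 hS) (by omega)
      | succ fuel' =>
        rw [TTCaux_succ, TTCaux_succ, dif_pos hS, dif_pos hS]
        funext j
        by_cases hj : j ∈ Dset Q S hS
        · rw [if_pos hj, if_pos hj]
        · rw [if_neg hj, if_neg hj]
          have hcard := Dset_card_lt Q S hS
          rw [ih fuel' _ (by omega) (by omega)]
    · rw [Finset.not_nonempty_iff_eq_empty.1 hS, TTCaux_empty, TTCaux_empty]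

lemma TTCaux_mem (Q : Fin n → Pref n) :
    ∀ fuel S, S.card ≤ fuel → ∀ j ∈ S, TTCaux Q fuel S j ∈ S := by
  intro fuel
  induction fuel with
  | zero =>
    intro S h j hj
    exact absurd (Finset.card_pos.2 ⟨j, hj⟩) (by omega)
  | succ fuel ih =>
    intro S h j hj
    have hS : S.Nonempty := ⟨j, hj⟩
    rw [TTCaux_succ, dif_pos hS]
    by_cases hjD : j ∈ Dset Q S hS
    · rw [if_pos hjD]; exact fmap_mem hj
    · rw [if_neg hjD]
      have hcard := Dset_card_lt Q S hS
      have := ih (S \ Dset Q S hS) (by omega) j (Finset.mem_sdiff.2 ⟨hj, hjD⟩)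
      exact (Finset.mem_sdiff.1 this).1

/-- Order independence: removing any union of cycles `C` first does not change the
TTC outcome. -/
lemma TTCaux_OI (Q : Fin n → Pref n) :
    ∀ fuel S (hS : S.Nonempty) C, C ⊆ S → S.card ≤ fuel →
      IsCyc (fmap Q S hS) C →
      ∀ fuel₂, (S \ C).card ≤ fuel₂ →
      ∀ j, TTCaux Q fuel S j = if j ∈ C then fmap Q S hS j else TTCaux Q fuel₂ (S \ C) j := by
  intro fuel
  induction fuel with
  | zero =>
    intro S hS C hCS h
    exact absurd (Finset.card_pos.2 hS) (by omega)
  | succ fuel ih =>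
    intro S hS C hCS hcard hC fuel₂ h₂ j
    by_cases hCne : C.Nonempty
    case neg =>
      rw [Finset.not_nonempty_iff_eq_empty.1 hCne] at h₂ ⊢
      rw [Finset.sdiff_empty] at h₂
      rw [if_neg (Finset.notMem_empty j), Finset.sdiff_empty,
        TTCaux_fuel Q (fuel+1) fuel₂ S hcard h₂]
    case pos =>
    obtain ⟨hDne, hDS, hDcyc, hDorb⟩ := Dset_spec Q S hS
    set f := fmap Q S hS with hfdef
    set D := Dset Q S hS with hDdef
    have hDcl : ∀ x ∈ D, f x ∈ D := fun x hx => (hDcyc x hx).1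
    have hCcl : ∀ x ∈ C, f x ∈ C := fun x hx => (hC x hx).1
    have hcardD : (S \ D).card < S.card := Dset_card_lt Q S hS
    rw [TTCaux_succ, dif_pos hS]
    by_cases hInt : ∃ x, x ∈ D ∧ x ∈ C
    · -- D ⊆ C
      obtain ⟨x, hxD, hxC⟩ := hInt
      have hDsubC : D ⊆ C := by
        intro y hy
        obtain ⟨k, hk⟩ := hDorb x hxD y hy
        rw [← hk]; exact iter_mem hCcl hxC k
      have hret : ∀ y ∈ C, f y ∈ D → y ∈ D := by
        intro y hy hfy
        obtain ⟨_, m, hm, hmy⟩ := hC y hy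
        exact cyc_ret hDcl hm hmy hfy
      have hseteq : (S \ D) \ (C \ D) = S \ C := by
        ext z
        simp only [Finset.mem_sdiff]
        constructor
        · rintro ⟨⟨hzS, hzD⟩, hz2⟩
          refine ⟨hzS, fun hzC => hzD ?_⟩
          by_contra hzD'
          exact hz2 ⟨hzC, hzD'⟩
        · rintro ⟨hzS, hzC⟩
          exact ⟨⟨hzS, fun hzD => hzC (hDsubC hzD)⟩, fun hz => hzC hz.1⟩
      by_cases hjD : j ∈ D
      · rw [if_pos hjD, if_pos (hDsubC hjD)]
      · rw [if_neg hjD]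
        by_cases hS' : (S \ D).Nonempty
        · -- apply IH with C \ D on S \ D
          have hC'cl : ∀ y ∈ C \ D, f y ∈ C \ D := by
            intro y hy
            rw [Finset.mem_sdiff] at hy ⊢
            exact ⟨hCcl y hy.1, fun hf => hy.2 (hret y hy.1 hf)⟩
          have hC'sub : C \ D ⊆ S \ D := Finset.sdiff_subset_sdiff hCS (le_refl _)
          have hagree : ∀ y ∈ C \ D, f y = fmap Q (S \ D) hS' y := by
            intro y hy
            exact (fmap_agree Q Finset.sdiff_subset hS' hS (hC'sub hy)
              (hC'sub (hC'cl y hy))).symm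
          have hcyc' : IsCyc (fmap Q (S \ D) hS') (C \ D) := by
            apply IsCyc_congr hagree
            intro y hy
            refine ⟨hC'cl y hy, ?_⟩
            obtain ⟨_, m, hm, hmy⟩ := hC y (Finset.mem_sdiff.1 hy).1
            exact ⟨m, hm, hmy⟩
          have h₂' : ((S \ D) \ (C \ D)).card ≤ fuel₂ := by rw [hseteq]; exact h₂
          have := ih (S \ D) hS' (C \ D) hC'sub (by omega) hcyc' fuel₂ h₂' j
          rw [this]
          by_cases hjC : j ∈ C
          · rw [if_pos hjC, if_pos (Finset.mem_sdiff.2 ⟨hjC, hjD⟩), ← hagree j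
              (Finset.mem_sdiff.2 ⟨hjC, hjD⟩)]
          · rw [if_neg hjC, if_neg (fun h => hjC (Finset.mem_sdiff.1 h).1), hseteq]
        · -- S \ D empty
          rw [Finset.not_nonempty_iff_eq_empty] at hS'
          have hjC : j ∉ C := by
            intro hjC
            have : j ∈ S \ D := Finset.mem_sdiff.2 ⟨hCS hjC, hjD⟩
            rw [hS'] at this
            exact Finset.notMem_empty j this
          rw [if_neg hjC, hS', TTCaux_empty]
          have hSC : S \ C = ∅ := by
            rw [← Finset.subset_empty, ← hS']
            exact Finset.sdiff_subset_sdiff (le_refl _) hDsubC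
          rw [hSC, TTCaux_empty]
    · -- D and C disjoint
      push_neg at hInt
      have hCsub1 : C ⊆ S \ D := fun y hy =>
        Finset.mem_sdiff.2 ⟨hCS hy, fun hD => hInt y hD hy⟩
      have hDsub2 : D ⊆ S \ C := fun y hy =>
        Finset.mem_sdiff.2 ⟨hDS hy, hInt y hy⟩
      have hS1 : (S \ D).Nonempty := hCne.mono hCsub1
      have hS2 : (S \ C).Nonempty := hDne.mono hDsub2
      have hcardC : (S \ C).card < S.card := by
        have h1 := Finset.card_sdiff_of_subset hCS
        have h2 := Finset.card_le_card hCS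
        have h3 : 0 < C.card := Finset.card_pos.2 hCne
        omega
      have hagree1 : ∀ y ∈ C, f y = fmap Q (S \ D) hS1 y := fun y hy =>
        (fmap_agree Q Finset.sdiff_subset hS1 hS (hCsub1 hy) (hCsub1 (hCcl y hy))).symm
      have hagree2 : ∀ y ∈ D, f y = fmap Q (S \ C) hS2 y := fun y hy =>
        (fmap_agree Q Finset.sdiff_subset hS2 hS (hDsub2 hy) (hDsub2 (hDcl y hy))).symm
      have hcyc1 : IsCyc (fmap Q (S \ D) hS1) C := IsCyc_congr hagree1 hC
      have hcyc2 : IsCyc (fmap Q (S \ C) hS2) D := IsCyc_congr hagree2 hDcyc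
      have hcomm : (S \ D) \ C = (S \ C) \ D := by
        ext z; simp only [Finset.mem_sdiff]; tauto
      have hrhs : TTCaux Q fuel₂ (S \ C) = TTCaux Q fuel (S \ C) :=
        TTCaux_fuel Q fuel₂ fuel (S \ C) h₂ (by omega)
      have hc1 : ((S \ D) \ C).card ≤ (S \ D).card :=
        Finset.card_le_card Finset.sdiff_subset
      have hc2 : ((S \ C) \ D).card ≤ (S \ C).card :=
        Finset.card_le_card Finset.sdiff_subset
      have hIH1 := ih (S \ D) hS1 C hCsub1 (by omega) hcyc1 fuel (by omega) j
      have hIH2 := ih (S \ C) hS2 D hDsub2 (by omega) hcyc2 fuel (by omega) j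
      by_cases hjD : j ∈ D
      · rw [if_pos hjD, if_neg (fun h => hInt j hjD h), hrhs, hIH2, if_pos hjD,
          ← hagree2 j hjD]
      · rw [if_neg hjD]
        by_cases hjC : j ∈ C
        · rw [if_pos hjC, hIH1, if_pos hjC, ← hagree1 j hjC]
        · rw [if_neg hjC, hIH1, if_neg hjC, hrhs, hIH2, if_neg hjD, hcomm]

lemma TTC_main [NeZero n] (Pr : Fin n → Pref n) (i : Fin n) (P' : Pref n) :
    ∀ fuel S, S.card ≤ fuel → i ∈ S → topOf (Pr i) ∈ S →
      TTCaux (Function.update Pr i P') fuel S i = topOf (Pr i) →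
      TTCaux Pr fuel S i = topOf (Pr i) := by
  intro fuel
  induction fuel with
  | zero =>
    intro S h hi
    exact absurd (Finset.card_pos.2 ⟨i, hi⟩) (by omega)
  | succ fuel ih =>
    intro S hcard hi ht hmis
    have hS : S.Nonempty := ⟨i, hi⟩
    obtain ⟨hDne, hDS, hDcyc, _⟩ := Dset_spec Pr S hS
    rw [TTCaux_succ, dif_pos hS]
    by_cases hiD : i ∈ Dset Pr S hS
    · rw [if_pos hiD]
      show fmap Pr S hS i = topOf (Pr i)
      unfold fmap
      rw [if_pos hi]
      exact best_topOf _ _ ht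
    · rw [if_neg hiD]
      have hcardD := Dset_card_lt Pr S hS
      have hagree : ∀ y ∈ Dset Pr S hS, fmap Pr S hS y = fmap (Function.update Pr i P') S hS y := by
        intro y hy
        have hyi : y ≠ i := fun h => hiD (h ▸ hy)
        unfold fmap
        rw [Function.update_of_ne hyi]
      have hDcyc' : IsCyc (fmap (Function.update Pr i P') S hS) (Dset Pr S hS) :=
        IsCyc_congr hagree hDcyc
      have hmis2 : TTCaux (Function.update Pr i P') fuel (S \ Dset Pr S hS) i = topOf (Pr i) := by
        have hOI := TTCaux_OI (Function.update Pr i P') (fuel+1) S hS (Dset Pr S hS)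
          hDS hcard hDcyc' fuel (by omega) i
        rw [hOI, if_neg hiD] at hmis
        exact hmis
      have hiSD : i ∈ S \ Dset Pr S hS := Finset.mem_sdiff.2 ⟨hi, hiD⟩
      by_cases htD : topOf (Pr i) ∈ Dset Pr S hS
      · exfalso
        have hmem := TTCaux_mem (Function.update Pr i P') fuel (S \ Dset Pr S hS)
          (by omega) i hiSD
        rw [hmis2] at hmem
        exact (Finset.mem_sdiff.1 hmem).2 htD
      · exact ih (S \ Dset Pr S hS) (by omega) hiSD
          (Finset.mem_sdiff.2 ⟨ht, htD⟩) hmis2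

end AuxTTC

theorem stmt7 {n : ℕ} [NeZero n] (Pr : Fin n → Pref n) (i : Fin n) (P' : Pref n)
    (h : TTC (Function.update Pr i P') i = topOf (Pr i)) :
    TTC Pr i = topOf (Pr i) := by
  exact TTC_main Pr i P' n Finset.univ (by simp) (Finset.mem_univ _) (Finset.mem_univ _) h
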